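/- Assume $(\varrho_n)_{n \in \mathbb{Z}}$ is summable. Then there exists a non-constant function $u : G_k \to \mathbb{R}$ which is $H_{ij}$-periodic and $p$-harmonic ($\Delta_p u(x) = 0$ for all $x \in G_k$). Thus, in contrast to the case of normal subgroups of finite index, a normal subgroup of infinite index can admit non-constant periodic $p$-harmonic functions. -/

import Mathlib

open scoped BigOperators

noncomputable section

/-- The group representation `G_k` of the Cayley tree of order `k`:
the free product of `k+1` copies of the cyclic group of order two. -/
abbrev G (k : ℕ) : Type := Monoid.CoprodI (fun _ : Fin (k + 1) => Multiplicative (ZMod 2))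

/-- The generators `a_0, ..., a_k` of `G_k`. -/
def gen (k : ℕ) (s : Fin (k + 1)) : G k :=
  Monoid.CoprodI.of (i := s) (Multiplicative.ofAdd (1 : ZMod 2))

/-- `φ_p(t) = |t|^(p-2) t` (real powers). -/
noncomputable def phiP (p t : ℝ) : ℝ := |t| ^ (p - 2) * t

/-- The discrete `p`-Laplacian on the Cayley tree with resistances `r`:
`Δ_p u (x) = ∑_{s=0}^{k} φ_p ((u (x a_s) - u x) / r (x, x a_s))`. -/
noncomputable def pLap (k : ℕ) (p : ℝ) (r : G k × G k → ℝ) (u : G k → ℝ) (x : G k) : ℝ :=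
  ∑ s : Fin (k + 1), phiP p ((u (x * gen k s) - u x) / r (x, x * gen k s))

/-- A function `u : G_k → ℝ` is `H`-periodic if `u (y x) = u x` for all `y ∈ H`, `x ∈ G_k`. -/
def IsPeriodic (k : ℕ) (H : Subgroup (G k)) (u : G k → ℝ) : Prop :=
  ∀ y ∈ H, ∀ x : G k, u (y * x) = u x

/-- The coset index `φ(x) = ρ(x)(0)` associated to a permutation action `ρ` of `G_k` on `ℤ`. -/
def cosetIdx {k : ℕ} (ρ : G k →* Equiv.Perm ℤ) (x : G k) : ℤ := ρ x 0

/-!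
Write `φ(x) = ρ(x)(0)` for the coset index. Each `ρ x` is an affine isometry `n ↦ ±n + c` of `ℤ`,
so right multiplication by `a_i` and by `a_j` moves `φ` one step up and one step down (in some
order), while the other generators fix it. Hence `u = F ∘ φ` with `F n = ∑_{m < n} ϱ_m` has, at
every vertex, slope `+1` along one of these two edges, slope `-1` along the other and slope `0`
along all others, so the odd function `φ_p` sums to zero there. The function `u` is
`ker f`-periodic because `ρ` factors through `f`, and non-constant because `ϱ_0 > 0`.
-/

lemma tsum_Iio_add_one_sub {E : Type*} [NormedAddCommGroup E] [CompleteSpace E] {f : ℤ → E}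
    (hf : Summable f) (n : ℤ) : ∑' m : Set.Iio (n + 1), f m - ∑' m : Set.Iio n, f m = f n := by
  have hstep : Set.Iio (n + 1) \ Set.Iio n = {n} := by
    rw [Set.Iio_add_one_eq_Iic, ← Set.Iio_insert, Set.insert_sdiff_eq_singleton Set.self_notMem_Iio]
  rw [tsum_subtype, tsum_subtype, ← (hf.indicator _).tsum_sub (hf.indicator _),
    ← tsum_singleton n f, tsum_subtype, ← hstep,
    Set.indicator_sdiff (Set.Iio_subset_Iio (Int.le_add_one le_rfl))]
  rfl

lemma MonoidHom.ker_le_ker_of_comp_eq {G H : Type*} [Group G] [Group H] {f : G →* G}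
    {ρ : G →* H} (h : ρ.comp f = ρ) : f.ker ≤ ρ.ker := by
  simpa only [MonoidHom.comap_ker, h] using f.ker_le_comap ρ.ker

lemma phiP_neg (p t : ℝ) : phiP p (-t) = -phiP p t := by
  simp [phiP]

namespace G

variable {k : ℕ}

lemma of_eq_one_or_eq_gen (s : Fin (k + 1)) (m : Multiplicative (ZMod 2)) :
    (Monoid.CoprodI.of (i := s) m : G k) = 1 ∨ Monoid.CoprodI.of (i := s) m = gen k s := by
  have : m = 1 ∨ m = Multiplicative.ofAdd 1 := by revert m; decide
  rcases this with rfl | rfl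
  · exact Or.inl (map_one _)
  · exact Or.inr rfl

theorem hom_ext {M : Type*} [Monoid M] {φ ψ : G k →* M}
    (h : ∀ s, φ (gen k s) = ψ (gen k s)) : φ = ψ := by
  refine Monoid.CoprodI.ext_hom _ _ fun s => MonoidHom.ext fun m => ?_
  rcases of_eq_one_or_eq_gen s m with hm | hm
  · simp only [MonoidHom.comp_apply, hm, map_one]
  · simp only [MonoidHom.comp_apply, hm, h]

@[elab_as_elim]
theorem induction_on {motive : G k → Prop} (x : G k) (one : motive 1)
    (gen : ∀ s, motive (gen k s)) (mul : ∀ x y, motive x → motive y → motive (x * y)) :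
    motive x := by
  induction x using Monoid.CoprodI.induction_on with
  | one => exact one
  | of s m => rcases of_eq_one_or_eq_gen s m with hm | hm <;> rw [hm]; exacts [one, gen s]
  | mul x y hx hy => exact mul x y hx hy

end G

section CosetIndex

variable {k : ℕ} {i j : Fin (k + 1)} {ρ : G k →* Equiv.Perm ℤ}

lemma cosetIdx_mul (x y : G k) : cosetIdx ρ (x * y) = ρ x (cosetIdx ρ y) := by
  simp [cosetIdx]

lemma cosetIdx_mul_of_map_eq_one {y : G k} (hy : ρ y = 1) (x : G k) :
    cosetIdx ρ (x * y) = cosetIdx ρ x := by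
  simp [cosetIdx, hy]

lemma comp_eq_of_map_gen (hρs : ∀ s, s ≠ i → s ≠ j → ρ (gen k s) = 1) {f : G k →* G k}
    (hfi : f (gen k i) = gen k i) (hfj : f (gen k j) = gen k j)
    (hfs : ∀ s, s ≠ i → s ≠ j → f (gen k s) = 1) : ρ.comp f = ρ :=
  G.hom_ext fun s => by
    by_cases hsi : s = i
    · subst hsi; simp [hfi]
    by_cases hsj : s = j
    · subst hsj; simp [hfj]
    simp [hfs s hsi hsj, hρs s hsi hsj]

variable (hρi : ∀ n, ρ (gen k i) n = 1 - n) (hρj : ∀ n, ρ (gen k j) n = -1 - n)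
  (hρs : ∀ s, s ≠ i → s ≠ j → ρ (gen k s) = 1)
include hρi hρj hρs

lemma exists_units_mul_add (x : G k) : ∃ (ε : ℤˣ) (c : ℤ), ∀ n, ρ x n = ε * n + c := by
  induction x using G.induction_on with
  | one => exact ⟨1, 0, by simp⟩
  | gen s =>
    by_cases hsi : s = i
    · exact ⟨-1, 1, fun n => by rw [hsi, hρi]; push_cast; ring⟩
    by_cases hsj : s = j
    · exact ⟨-1, -1, fun n => by rw [hsj, hρj]; push_cast; ring⟩
    exact ⟨1, 0, fun n => by simp [hρs s hsi hsj]⟩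
  | mul x y hx hy =>
    obtain ⟨ε₁, c₁, hx⟩ := hx
    obtain ⟨ε₂, c₂, hy⟩ := hy
    refine ⟨ε₁ * ε₂, ε₁ * c₂ + c₁, fun n => ?_⟩
    rw [map_mul, Equiv.Perm.mul_apply, hy, hx, Units.val_mul]
    ring

lemma cosetIdx_mul_gen_up_down (x : G k) :
    (cosetIdx ρ (x * gen k i) = cosetIdx ρ x + 1 ∧ cosetIdx ρ (x * gen k j) = cosetIdx ρ x - 1) ∨
      (cosetIdx ρ (x * gen k i) = cosetIdx ρ x - 1 ∧
        cosetIdx ρ (x * gen k j) = cosetIdx ρ x + 1) := by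
  obtain ⟨ε, c, hx⟩ := exists_units_mul_add hρi hρj hρs x
  rw [cosetIdx_mul, cosetIdx_mul]
  simp only [cosetIdx, hρi, hρj, hx]
  rcases Int.units_eq_one_or ε with rfl | rfl
  · left; constructor <;> push_cast <;> ring
  · right; constructor <;> push_cast <;> ring

end CosetIndex

section LevelFunction

variable {k : ℕ} {r : G k × G k → ℝ} {ℓ : G k → ℤ} {ϱ F : ℤ → ℝ}
  (hF : ∀ n, F (n + 1) - F n = ϱ n) (hϱ : ∀ n, 0 < ϱ n)
  (hrϱ : ∀ x y, ℓ y = ℓ x + 1 → r (x, y) = ϱ (ℓ x))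
include hF hϱ hrϱ

lemma slope_eq_one_of_up {x y : G k} (h : ℓ y = ℓ x + 1) :
    (F (ℓ y) - F (ℓ x)) / r (x, y) = 1 := by
  rw [hrϱ x y h, h, hF, div_self (hϱ _).ne']

lemma slope_eq_neg_one_of_down (hr_symm : ∀ x y, r (x, y) = r (y, x)) {x y : G k}
    (h : ℓ y = ℓ x - 1) : (F (ℓ y) - F (ℓ x)) / r (x, y) = -1 := by
  rw [hr_symm, ← slope_eq_one_of_up hF hϱ hrϱ (x := y) (y := x) (by omega), ← neg_div, neg_sub]

lemma pLap_comp_eq_zero (hr_symm : ∀ x y, r (x, y) = r (y, x)) (p : ℝ) {i j : Fin (k + 1)}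
    (hij : i ≠ j) (hs : ∀ x s, s ≠ i → s ≠ j → ℓ (x * gen k s) = ℓ x)
    (hup_down : ∀ x, (ℓ (x * gen k i) = ℓ x + 1 ∧ ℓ (x * gen k j) = ℓ x - 1) ∨
      (ℓ (x * gen k i) = ℓ x - 1 ∧ ℓ (x * gen k j) = ℓ x + 1)) (x : G k) :
    pLap k p r (F ∘ ℓ) x = 0 := by
  have up := fun {y} => slope_eq_one_of_up hF hϱ hrϱ (x := x) (y := y)
  have down := fun {y} => slope_eq_neg_one_of_down hF hϱ hrϱ hr_symm (x := x) (y := y)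
  rw [pLap, Fintype.sum_eq_add i j hij fun s ⟨hsi, hsj⟩ => by simp [hs x s hsi hsj, phiP]]
  rcases hup_down x with ⟨hi, hj⟩ | ⟨hi, hj⟩
  · simp only [Function.comp_apply, up hi, down hj, phiP_neg, add_neg_cancel]
  · simp only [Function.comp_apply, up hj, down hi, phiP_neg, neg_add_cancel]

end LevelFunction

theorem stmt18_general (k : ℕ) (p : ℝ)
    (r : G k × G k → ℝ) (hr_symm : ∀ x y : G k, r (x, y) = r (y, x))
    (i j : Fin (k + 1)) (hij : i ≠ j)
    (ρ : G k →* Equiv.Perm ℤ)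
    (hρi : ∀ n : ℤ, ρ (gen k i) n = 1 - n)
    (hρj : ∀ n : ℤ, ρ (gen k j) n = -1 - n)
    (hρs : ∀ s : Fin (k + 1), s ≠ i → s ≠ j → ρ (gen k s) = 1)
    (f : G k →* G k)
    (hfi : f (gen k i) = gen k i) (hfj : f (gen k j) = gen k j)
    (hfs : ∀ s : Fin (k + 1), s ≠ i → s ≠ j → f (gen k s) = 1)
    (ϱ : ℤ → ℝ) (hϱ_pos : ∀ n : ℤ, 0 < ϱ n)
    (hrϱ : ∀ x y : G k, cosetIdx ρ y = cosetIdx ρ x + 1 → r (x, y) = ϱ (cosetIdx ρ x))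
    (hϱ_sum : Summable ϱ) :
    ∃ u : G k → ℝ, (∃ x y : G k, u x ≠ u y) ∧ IsPeriodic k f.ker u ∧
      ∀ x : G k, pLap k p r u x = 0 := by
  set F : ℤ → ℝ := fun n => ∑' m : Set.Iio n, ϱ m
  have hF : ∀ n, F (n + 1) - F n = ϱ n := tsum_Iio_add_one_sub hϱ_sum
  refine ⟨F ∘ cosetIdx ρ, ⟨gen k i, 1, fun h => ?_⟩, fun y hy x => ?_,
    pLap_comp_eq_zero hF hϱ_pos hrϱ hr_symm p hij
      (fun x s hsi hsj => cosetIdx_mul_of_map_eq_one (hρs s hsi hsj) x)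
      (cosetIdx_mul_gen_up_down hρi hρj hρs)⟩
  · have hstep : F (cosetIdx ρ (gen k i)) - F (cosetIdx ρ 1) = ϱ 0 := by
      simpa [cosetIdx, hρi] using hF 0
    exact (hϱ_pos 0).ne' (hstep ▸ sub_eq_zero.mpr h)
  · have hρy : ρ y = 1 := MonoidHom.ker_le_ker_of_comp_eq (comp_eq_of_map_gen hρs hfi hfj hfs) hy
    simp only [Function.comp_apply, cosetIdx_mul, hρy, Equiv.Perm.one_apply]

theorem stmt18 (k : ℕ) (hk : 1 ≤ k) (p : ℝ) (hp1 : 1 < p)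
    (r : G k × G k → ℝ) (hr_symm : ∀ x y : G k, r (x, y) = r (y, x)) (hr_pos : ∀ x y : G k, 0 < r (x, y))
    (i j : Fin (k + 1)) (hij : i ≠ j)
    (ρ : G k →* Equiv.Perm ℤ)
    (hρi : ∀ n : ℤ, ρ (gen k i) n = 1 - n)
    (hρj : ∀ n : ℤ, ρ (gen k j) n = -1 - n)
    (hρs : ∀ s : Fin (k + 1), s ≠ i → s ≠ j → ρ (gen k s) = 1)
    (f : G k →* G k)
    (hfi : f (gen k i) = gen k i) (hfj : f (gen k j) = gen k j)
    (hfs : ∀ s : Fin (k + 1), s ≠ i → s ≠ j → f (gen k s) = 1)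
    (ϱ : ℤ → ℝ) (hϱ_pos : ∀ n : ℤ, 0 < ϱ n)
    (hrϱ : ∀ x y : G k, cosetIdx ρ y = cosetIdx ρ x + 1 → r (x, y) = ϱ (cosetIdx ρ x))
    (hϱ_sum : Summable ϱ) :
    ∃ u : G k → ℝ, (∃ x y : G k, u x ≠ u y) ∧ IsPeriodic k f.ker u ∧
      ∀ x : G k, pLap k p r u x = 0 :=
  stmt18_general k p r hr_symm i j hij ρ hρi hρj hρs f hfi hfj hfs ϱ hϱ_pos hrϱ hϱ_sum
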